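/- If the input sequence {u_k}_{k=0}^{N−1} is K_u-PE of order n+1 for some symmetric positive definite K_u ∈ ℝ^{m(n+1)×m(n+1)}, then for every system (A,B,C,D) that is output reachable (i.e., Γ has full row rank p) and every initial state x_0 ∈ ℝ^n, the output sequence {y_k}_{k=0}^{N−1} generated from x_0 under u satisfies Σ_{k=0}^{N−1} y_k y_k^T ⪰ (1/(n+1)) M K_u M^T, and the matrix K_y = (1/(n+1)) M K_u M^T is positive definite; that is, the output is K_y-PE of order 1. -/

import Mathlib

/-!
Applying the annihilating polynomial `d` of `A` to a window of outputs eliminates the state: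
`∑ⱼ d_j y_{k+n-j} = M u_{[k,k+n]}`. So for every `x`, Cauchy–Schwarz with `‖d‖ = 1` bounds
`(xᵀ M u_{[k,k+n]})²` by the output energy `∑ⱼ (xᵀ y_{k+j})²` on that window; summing over the
windows counts each output sample at most `n + 1` times, and persistency of excitation of `u` gives
`xᵀ M K_u Mᵀ x ≤ (n + 1) ∑ₜ (xᵀ y_t)²`.

For definiteness, `xᵀ M = 0` is a triangular convolution system for the blocks `xᵀ Γ_q` with
diagonal `d_0 ≠ 0`, so `xᵀ Γ = 0`, and the full row rank of `Γ` forces `x = 0`.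
-/

open Matrix Finset

noncomputable def stateSeq {n m : ℕ} (A : Matrix (Fin n) (Fin n) ℝ) (B : Matrix (Fin n) (Fin m) ℝ)
    (x0 : Fin n → ℝ) (u : ℕ → Fin m → ℝ) : ℕ → Fin n → ℝ
  | 0 => x0
  | k + 1 => A.mulVec (stateSeq A B x0 u k) + B.mulVec (u k)

/-- Output sequence `y_k = C x_k + D u_k` of the LTI system started at `x0` with input `u`. -/
noncomputable def outputSeq {n m p : ℕ} (A : Matrix (Fin n) (Fin n) ℝ) (B : Matrix (Fin n) (Fin m) ℝ)
    (C : Matrix (Fin p) (Fin n) ℝ) (D : Matrix (Fin p) (Fin m) ℝ)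
    (x0 : Fin n → ℝ) (u : ℕ → Fin m → ℝ) (k : ℕ) : Fin p → ℝ :=
  C.mulVec (stateSeq A B x0 u k) + D.mulVec (u k)

/-- Markov parameters: `Γ_0 = D`, `Γ_j = C A^(j-1) B` for `j ≥ 1`. -/
noncomputable def Markov {n m p : ℕ} (A : Matrix (Fin n) (Fin n) ℝ) (B : Matrix (Fin n) (Fin m) ℝ)
    (C : Matrix (Fin p) (Fin n) ℝ) (D : Matrix (Fin p) (Fin m) ℝ) : ℕ → Matrix (Fin p) (Fin m) ℝ
  | 0 => D
  | j + 1 => C * A ^ j * B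

/-- The matrix `M = [M_n ⋯ M_1 M_0]` with `M_j = ∑_{q=0}^j d_{j-q} Γ_q`; the block at
block-column `i` (from the left, `i = 0,…,n`) is `M_{n-i}`. -/
noncomputable def Mmat {n m p : ℕ} (A : Matrix (Fin n) (Fin n) ℝ) (B : Matrix (Fin n) (Fin m) ℝ)
    (C : Matrix (Fin p) (Fin n) ℝ) (D : Matrix (Fin p) (Fin m) ℝ) (d : ℕ → ℝ) :
    Matrix (Fin p) (Fin (n + 1) × Fin m) ℝ :=
  Matrix.of fun i jl =>
    (∑ q ∈ Finset.range ((n - (jl.1 : ℕ)) + 1),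
      d ((n - (jl.1 : ℕ)) - q) • Markov A B C D q) i jl.2

/-- The matrix `Γ = [Γ_0 Γ_1 ⋯ Γ_n]`. -/
noncomputable def Gammamat {n m p : ℕ} (A : Matrix (Fin n) (Fin n) ℝ) (B : Matrix (Fin n) (Fin m) ℝ)
    (C : Matrix (Fin p) (Fin n) ℝ) (D : Matrix (Fin p) (Fin m) ℝ) :
    Matrix (Fin p) (Fin (n + 1) × Fin m) ℝ :=
  Matrix.of fun i jl => Markov A B C D (jl.1 : ℕ) i jl.2

theorem Matrix.vecMul_injective_of_rank_eq_card {K m n : Type*} [Field K] [Fintype m]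
    [Fintype n] (A : Matrix m n K) (hA : A.rank = Fintype.card m) :
    Function.Injective A.vecMul := by
  rw [vecMul_injective_iff, linearIndependent_iff_card_eq_finrank_span, ← hA,
    rank_eq_finrank_span_row, Set.finrank]

theorem Matrix.dotProduct_sum_vecMulVec_self_mulVec {R ι κ : Type*} [CommRing R] [Fintype ι]
    (s : Finset κ) (a : κ → ι → R) (x : ι → R) :
    x ⬝ᵥ ((∑ k ∈ s, vecMulVec (a k) (a k)) *ᵥ x) = ∑ k ∈ s, (a k ⬝ᵥ x) ^ 2 := by
  simp only [sum_mulVec, dotProduct_sum, vecMulVec_mulVec, op_smul_eq_smul, dotProduct_smul,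
    smul_eq_mul, dotProduct_comm x (a _), sq]

theorem Matrix.dotProduct_mulVec_le_of_posSemidef_sum_vecMulVec_sub {ι κ : Type*} [Fintype ι]
    {s : Finset κ} {a : κ → ι → ℝ} {K : Matrix ι ι ℝ}
    (h : ((∑ k ∈ s, vecMulVec (a k) (a k)) - K).PosSemidef) (x : ι → ℝ) :
    x ⬝ᵥ (K *ᵥ x) ≤ ∑ k ∈ s, (a k ⬝ᵥ x) ^ 2 := by
  have := h.dotProduct_mulVec_nonneg x
  rwa [star_trivial, sub_mulVec, dotProduct_sub, sub_nonneg,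
    dotProduct_sum_vecMulVec_self_mulVec] at this

theorem Matrix.isHermitian_sum_vecMulVec_self {ι κ : Type*} [Fintype ι] (s : Finset κ)
    (a : κ → ι → ℝ) : (∑ k ∈ s, vecMulVec (a k) (a k)).IsHermitian :=
  (posSemidef_sum (R := ℝ) s fun k _ => by
    simpa using posSemidef_vecMulVec_self_star (a k)).isHermitian

theorem Matrix.dotProduct_mul_mul_transpose_mulVec {R ι κ : Type*} [CommRing R] [Fintype ι]
    [Fintype κ]
    (M : Matrix ι κ R) (K : Matrix κ κ R) (x : ι → R) :
    x ⬝ᵥ ((M * K * Mᵀ) *ᵥ x) = (x ᵥ* M) ⬝ᵥ (K *ᵥ (x ᵥ* M)) := by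
  rw [← mulVec_mulVec, ← mulVec_mulVec, dotProduct_mulVec, mulVec_transpose]

theorem Finset.sum_range_sum_range_add_le {M : Type*} [AddCommMonoid M] [PartialOrder M]
    [IsOrderedAddMonoid M] {f : ℕ → M} (hf : ∀ t, 0 ≤ f t) (n N : ℕ) :
    ∑ k ∈ range (N - n), ∑ j ∈ range (n + 1), f (k + j) ≤ (n + 1) • ∑ t ∈ range N, f t := by
  rw [sum_comm]
  refine (sum_le_card_nsmul (range (n + 1)) _ _ fun j hj => ?_).trans_eq (by rw [card_range])
  rw [range_eq_Ico, range_eq_Ico, sum_Ico_add']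
  refine sum_le_sum_of_subset_of_nonneg (fun t ht => ?_) fun t _ _ => hf t
  simp only [mem_Ico, mem_range] at ht hj ⊢
  omega

theorem eq_zero_of_sum_range_smul_eq_zero {K V : Type*} [Field K] [AddCommGroup V] [Module K V]
    {d : ℕ → K} (hd0 : d 0 ≠ 0) {g : ℕ → V} {n : ℕ}
    (h : ∀ s ≤ n, ∑ q ∈ range (s + 1), d (s - q) • g q = 0) : ∀ q ≤ n, g q = 0 := by
  intro s
  induction s using Nat.strong_induction_on with
  | _ s ih =>
    intro hs
    have hlast := h s hs
    rw [sum_range_succ, sum_eq_zero fun q hq => by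
      rw [ih q (mem_range.1 hq) (by grind), smul_zero], zero_add, Nat.sub_self] at hlast
    exact (smul_eq_zero.1 hlast).resolve_left hd0

theorem Finset.sum_range_sum_range_sub_sub_comm {M : Type*} [AddCommMonoid M] (n : ℕ)
    (f : ℕ → ℕ → ℕ → M) :
    ∑ j ∈ range (n + 1), ∑ q ∈ range (n - j + 1), f j q (n - j - q) =
      ∑ i ∈ range (n + 1), ∑ q ∈ range (n - i + 1), f (n - i - q) q i := by
  rw [sum_sigma', sum_sigma']
  refine sum_nbij' (fun a => ⟨n - a.1 - a.2, a.2⟩) (fun a => ⟨n - a.1 - a.2, a.2⟩)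
    ?_ ?_ ?_ ?_ ?_ <;> rintro ⟨j, q⟩ h <;> simp only [mem_sigma, mem_range] at h
  · simp only [mem_sigma, mem_range]; omega
  · simp only [mem_sigma, mem_range]; omega
  · simp only [Sigma.mk.inj_iff, heq_eq_eq, and_true]; omega
  · simp only [Sigma.mk.inj_iff, heq_eq_eq, and_true]; omega
  · dsimp only
    congr 1; omega

def inputWindow {m : ℕ} (n : ℕ) (u : ℕ → Fin m → ℝ) (k : ℕ) : Fin (n + 1) × Fin m → ℝ :=
  fun il => u (k + il.1) il.2

section LTI

variable {n m p : ℕ} (A : Matrix (Fin n) (Fin n) ℝ) (B : Matrix (Fin n) (Fin m) ℝ)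
  (C : Matrix (Fin p) (Fin n) ℝ) (D : Matrix (Fin p) (Fin m) ℝ)
  (x0 : Fin n → ℝ) (u : ℕ → Fin m → ℝ)

theorem stateSeq_add (k i : ℕ) :
    stateSeq A B x0 u (k + i) =
      (A ^ i) *ᵥ stateSeq A B x0 u k + ∑ j ∈ range i, (A ^ (i - 1 - j) * B) *ᵥ u (k + j) := by
  induction i with
  | zero => simp
  | succ i ih =>
    rw [← add_assoc, stateSeq, ih, mulVec_add, mulVec_mulVec, ← pow_succ', mulVec_sum,
      sum_range_succ, add_assoc]
    congr 2
    · refine sum_congr rfl fun j hj => ?_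
      rw [mulVec_mulVec, ← Matrix.mul_assoc, ← pow_succ']
      congr 3
      grind
    · simp

theorem outputSeq_add (k i : ℕ) :
    outputSeq A B C D x0 u (k + i) =
      (C * A ^ i) *ᵥ stateSeq A B x0 u k
        + ∑ q ∈ range (i + 1), Markov A B C D q *ᵥ u (k + (i - q)) := by
  rw [outputSeq, stateSeq_add, mulVec_add, mulVec_mulVec, mulVec_sum, sum_range_succ',
    ← sum_range_reflect, add_assoc]
  congr 2
  refine sum_congr rfl fun j hj => ?_
  rw [Markov, mulVec_mulVec, Matrix.mul_assoc]
  congr 3 <;> grind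

theorem Mmat_mulVec_apply (d : ℕ → ℝ) (w : Fin (n + 1) × Fin m → ℝ) :
    Mmat A B C D d *ᵥ w = ∑ i : Fin (n + 1), ∑ q ∈ range (n - i + 1),
      d (n - i - q) • (Markov A B C D q *ᵥ fun l => w (i, l)) := by
  ext r
  simp only [mulVec, dotProduct, Mmat, of_apply, Fintype.sum_prod_type, Matrix.sum_apply,
    Matrix.smul_apply, smul_eq_mul, Finset.sum_apply, Pi.smul_apply, sum_mul, mul_sum, mul_assoc]
  exact sum_congr rfl fun i _ => sum_comm

theorem Mmat_mulVec_inputWindow (d : ℕ → ℝ) (hd : ∑ j ∈ range (n + 1), d j • A ^ (n - j) = 0)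
    (k : ℕ) : Mmat A B C D d *ᵥ inputWindow n u k =
      ∑ j ∈ range (n + 1), d j • outputSeq A B C D x0 u (k + (n - j)) := by
  have hfree : ∑ j ∈ range (n + 1), d j • ((C * A ^ (n - j)) *ᵥ stateSeq A B x0 u k) = 0 := by
    simp_rw [← smul_mulVec, ← sum_mulVec, ← Matrix.mul_smul, ← Matrix.mul_sum, hd,
      Matrix.mul_zero, zero_mulVec]
  simp_rw [outputSeq_add, smul_add, sum_add_distrib, hfree, zero_add, smul_sum]
  rw [sum_range_sum_range_sub_sub_comm n fun j q i => d j • (Markov A B C D q *ᵥ u (k + i)),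
    Mmat_mulVec_apply]
  exact Fin.sum_univ_eq_sum_range
    (fun i => ∑ q ∈ range (n - i + 1), d (n - i - q) • (Markov A B C D q *ᵥ u (k + i))) (n + 1)

theorem sq_inputWindow_dotProduct_vecMul_Mmat_le {d : ℕ → ℝ}
    (hd2 : ∑ j ∈ range (n + 1), d j ^ 2 = 1)
    (hd : ∑ j ∈ range (n + 1), d j • A ^ (n - j) = 0) (x : Fin p → ℝ) (k : ℕ) :
    (inputWindow n u k ⬝ᵥ (x ᵥ* Mmat A B C D d)) ^ 2 ≤
      ∑ j ∈ range (n + 1), (outputSeq A B C D x0 u (k + j) ⬝ᵥ x) ^ 2 := by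
  rw [dotProduct_comm, ← dotProduct_mulVec, Mmat_mulVec_inputWindow A B C D x0 u d hd,
    dotProduct_sum]
  calc (∑ j ∈ range (n + 1), x ⬝ᵥ d j • outputSeq A B C D x0 u (k + (n - j))) ^ 2
      = (∑ j ∈ range (n + 1), d j * (outputSeq A B C D x0 u (k + (n - j)) ⬝ᵥ x)) ^ 2 := by
        simp only [dotProduct_comm x, smul_dotProduct, smul_eq_mul]
    _ ≤ (∑ j ∈ range (n + 1), d j ^ 2) *
          ∑ j ∈ range (n + 1), (outputSeq A B C D x0 u (k + (n - j)) ⬝ᵥ x) ^ 2 :=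
        sum_mul_sq_le_sq_mul_sq _ _ _
    _ = ∑ j ∈ range (n + 1), (outputSeq A B C D x0 u (k + j) ⬝ᵥ x) ^ 2 := by
        rw [hd2, one_mul, ← sum_range_reflect]
        exact sum_congr rfl fun j hj => by rw [Nat.add_sub_cancel, Nat.sub_sub_self (by grind)]

theorem vecMul_Mmat_apply (d : ℕ → ℝ) (x : Fin p → ℝ) (i : Fin (n + 1)) (l : Fin m) :
    (x ᵥ* Mmat A B C D d) (i, l) =
      ∑ q ∈ range (n - i + 1), (d (n - i - q) • (x ᵥ* Markov A B C D q)) l := by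
  simp only [vecMul, dotProduct, Mmat, of_apply, Matrix.sum_apply, Matrix.smul_apply,
    Pi.smul_apply, smul_eq_mul, mul_sum]
  exact sum_comm.trans (sum_congr rfl fun q _ => sum_congr rfl fun r _ => by ring)

theorem vecMul_Gammamat_eq_zero {d : ℕ → ℝ} (hd0 : d 0 ≠ 0) {x : Fin p → ℝ}
    (hx : x ᵥ* Mmat A B C D d = 0) : x ᵥ* Gammamat A B C D = 0 := by
  have hconv : ∀ s ≤ n, ∑ q ∈ range (s + 1), d (s - q) • (x ᵥ* Markov A B C D q) = 0 := by
    intro s hs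
    ext l
    have := congrFun hx (⟨n - s, by omega⟩, l)
    rwa [vecMul_Mmat_apply, Fin.val_mk, Nat.sub_sub_self hs, ← Finset.sum_apply] at this
  ext ⟨i, l⟩
  simpa [vecMul, dotProduct, Gammamat] using
    congrFun (eq_zero_of_sum_range_smul_eq_zero hd0 hconv i (Nat.lt_succ_iff.1 i.2)) l

theorem vecMul_Mmat_injective (hΓ : (Gammamat A B C D).rank = p) {d : ℕ → ℝ} (hd0 : d 0 ≠ 0) :
    Function.Injective (Mmat A B C D d).vecMul := by
  have hΓinj := (Gammamat A B C D).vecMul_injective_of_rank_eq_card (by simpa using hΓ)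
  intro x y hxy
  rw [← sub_eq_zero, ← hΓinj.eq_iff, zero_vecMul]
  exact vecMul_Gammamat_eq_zero A B C D hd0 (by rw [sub_vecMul, sub_eq_zero]; exact hxy)

end LTI

theorem stmt_6_general {n m p : ℕ}
    (N : ℕ) (hN : n < N) (u : ℕ → Fin m → ℝ)
    (Ku : Matrix (Fin (n + 1) × Fin m) (Fin (n + 1) × Fin m) ℝ) (hKu : Ku.PosDef)
    (hPE : ((∑ k ∈ Finset.range (N - (n + 1) + 1),
        vecMulVec (fun il : Fin (n + 1) × Fin m => u (k + (il.1 : ℕ)) il.2)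
          (fun il : Fin (n + 1) × Fin m => u (k + (il.1 : ℕ)) il.2)) - Ku).PosSemidef) :
    ∀ (A : Matrix (Fin n) (Fin n) ℝ) (B : Matrix (Fin n) (Fin m) ℝ)
      (C : Matrix (Fin p) (Fin n) ℝ) (D : Matrix (Fin p) (Fin m) ℝ),
      (Gammamat A B C D).rank = p →
      ∀ d : ℕ → ℝ, d 0 ≠ 0 →
        (∑ j ∈ Finset.range (n + 1), d j ^ 2 = 1) →
        (∑ j ∈ Finset.range (n + 1), d j • A ^ (n - j) = 0) →
        ∀ x0 : Fin n → ℝ,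
          ((∑ k ∈ Finset.range N,
              vecMulVec (outputSeq A B C D x0 u k) (outputSeq A B C D x0 u k)) -
            ((1 : ℝ) / (n + 1)) • (Mmat A B C D d * Ku * (Mmat A B C D d)ᴴ)).PosSemidef ∧
          (((1 : ℝ) / (n + 1)) • (Mmat A B C D d * Ku * (Mmat A B C D d)ᴴ)).PosDef := by
  intro A B C D hΓ d hd0 hd2 hd x0
  set M := Mmat A B C D d
  set y := outputSeq A B C D x0 u
  have hc : (0 : ℝ) < 1 / (n + 1) := by positivity
  have hwindows : N - (n + 1) + 1 = N - n := by omega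
  rw [hwindows] at hPE
  have hbound (x : Fin p → ℝ) :
      (x ᵥ* M) ⬝ᵥ (Ku *ᵥ (x ᵥ* M)) ≤ (n + 1) * ∑ t ∈ range N, (y t ⬝ᵥ x) ^ 2 :=
    calc (x ᵥ* M) ⬝ᵥ (Ku *ᵥ (x ᵥ* M))
        ≤ ∑ k ∈ range (N - n), (inputWindow n u k ⬝ᵥ (x ᵥ* M)) ^ 2 :=
          dotProduct_mulVec_le_of_posSemidef_sum_vecMulVec_sub hPE _
      _ ≤ ∑ k ∈ range (N - n), ∑ j ∈ range (n + 1), (y (k + j) ⬝ᵥ x) ^ 2 :=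
          sum_le_sum fun k _ => sq_inputWindow_dotProduct_vecMul_Mmat_le A B C D x0 u hd2 hd x k
      _ ≤ (n + 1) * ∑ t ∈ range N, (y t ⬝ᵥ x) ^ 2 := by
          simpa using sum_range_sum_range_add_le (fun t => sq_nonneg (y t ⬝ᵥ x)) n N
  have hKy := (hKu.mul_mul_conjTranspose_same (vecMul_Mmat_injective A B C D hΓ hd0)).smul hc
  refine ⟨.of_dotProduct_mulVec_nonneg ((isHermitian_sum_vecMulVec_self _ _).sub hKy.isHermitian)
    fun x => ?_, hKy⟩
  rw [star_trivial, sub_mulVec, dotProduct_sub, sub_nonneg, smul_mulVec, dotProduct_smul,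
    smul_eq_mul, conjTranspose_eq_transpose_of_trivial, dotProduct_mul_mul_transpose_mulVec,
    dotProduct_sum_vecMulVec_self_mulVec, one_div, inv_mul_le_iff₀ (by positivity)]
  exact hbound x

/-- if `u` is `K_u`-PE of order `n+1`, then for every output reachable system and
every initial state, `∑ y_k y_kᵀ ⪰ (1/(n+1)) M K_u Mᵀ` and `K_y = (1/(n+1)) M K_u Mᵀ ≻ 0`. -/
theorem stmt_6 {n m p : ℕ} (hn : 0 < n) (hm : 0 < m) (hp : 0 < p)
    (N : ℕ) (hN : n < N) (u : ℕ → Fin m → ℝ)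
    (Ku : Matrix (Fin (n + 1) × Fin m) (Fin (n + 1) × Fin m) ℝ) (hKu : Ku.PosDef)
    (hPE : ((∑ k ∈ Finset.range (N - (n + 1) + 1),
        vecMulVec (fun il : Fin (n + 1) × Fin m => u (k + (il.1 : ℕ)) il.2)
          (fun il : Fin (n + 1) × Fin m => u (k + (il.1 : ℕ)) il.2)) - Ku).PosSemidef) :
    ∀ (A : Matrix (Fin n) (Fin n) ℝ) (B : Matrix (Fin n) (Fin m) ℝ)
      (C : Matrix (Fin p) (Fin n) ℝ) (D : Matrix (Fin p) (Fin m) ℝ),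
      (Gammamat A B C D).rank = p →
      ∀ d : ℕ → ℝ, d 0 ≠ 0 →
        (∑ j ∈ Finset.range (n + 1), d j ^ 2 = 1) →
        (∑ j ∈ Finset.range (n + 1), d j • A ^ (n - j) = 0) →
        ∀ x0 : Fin n → ℝ,
          ((∑ k ∈ Finset.range N,
              vecMulVec (outputSeq A B C D x0 u k) (outputSeq A B C D x0 u k)) -
            ((1 : ℝ) / (n + 1)) • (Mmat A B C D d * Ku * (Mmat A B C D d)ᴴ)).PosSemidef ∧
          (((1 : ℝ) / (n + 1)) • (Mmat A B C D d * Ku * (Mmat A B C D d)ᴴ)).PosDef :=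
  stmt_6_general N hN u Ku hKu hPE
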